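/- arXiv:1909.05724 — 5 statements merged into one kernel-verified Lean document; each statement's English description precedes it below -/
import Mathlib

section
/- Let f : ℝ^d → ℝ be a proper, nonnegative C² function, and let α > 0, β > 0 and a ∈ ℝ be constants such that Δf − α|∇f|² + βf ≤ a and Δf ≤ a hold everywhere on ℝ^d. Then for every r ≥ 1, the Lebesgue volume of the sublevel set D_r = {x ∈ ℝ^d : 2√(f(x)) ≤ √(2β)·r} satisfies Vol(D_r) ≤ e^{αβ/2} · r^{2αa/β} · ∫_{D_r} e^{−αf} dx. -/
/-!
On a sublevel set `D = {f ≤ t}`, `div (e^{-sf} ∇f) = (Δf - s|∇f|²) e^{-sf}`, and the flux of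
`e^{-sf} ∇f` through `∂D` is nonnegative because `∇f` points outward; testing against smooth
cutoffs `φ ∘ f` of `D` with `φ` antitone makes this rigorous and gives
`s ∫_D |∇f|² e^{-sf} ≤ ∫_D Δf e^{-sf}`. Together with the two hypotheses on `Δf` this yields
`s ∫_D f e^{-sf} ≤ (αa/β) ∫_D e^{-sf}` for `0 < s ≤ α`, i.e. `s ↦ s^{αa/β} ∫_D e^{-sf}` is
nondecreasing on `(0, α]`. Comparing `s = α/r²` with `s = α` and using
`Vol(D) ≤ e^{st} ∫_D e^{-sf}` at `t = βr²/2` gives the bound.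
-/

open MeasureTheory Real Gradient

/-- The Laplacian of a function on Euclidean space, as the trace of the second derivative. -/
noncomputable def lap {d : ℕ} (f : EuclideanSpace ℝ (Fin d) → ℝ)
    (x : EuclideanSpace ℝ (Fin d)) : ℝ :=
  ∑ i : Fin d,
    iteratedFDeriv ℝ 2 f x ![EuclideanSpace.single i 1, EuclideanSpace.single i 1]

open Filter Topology InnerProductSpace

section Gradient

variable {F : Type*} [NormedAddCommGroup F] [InnerProductSpace ℝ F] [CompleteSpace F]
  {f : F → ℝ}

lemma fderiv_apply_gradient (x : F) : fderiv ℝ f x (∇ f x) = ‖∇ f x‖ ^ 2 := by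
  rw [← toDual_gradient, toDual_apply_apply, real_inner_self_eq_norm_sq]

lemma continuous_gradient (hf : ContDiff ℝ 1 f) : Continuous (∇ f) :=
  (toDual ℝ F).symm.continuous.comp (hf.continuous_fderiv one_ne_zero)

end Gradient

local notation "𝐞" i => EuclideanSpace.single i (1 : ℝ)

section Euclidean

variable {d : ℕ} {f w : EuclideanSpace ℝ (Fin d) → ℝ} {φ : ℝ → ℝ}

lemma sum_fderiv_single_mul_apply (x : EuclideanSpace ℝ (Fin d))
    (L : EuclideanSpace ℝ (Fin d) →L[ℝ] ℝ) :
    ∑ i, fderiv ℝ f x (𝐞 i) * L (𝐞 i) = L (∇ f x) := by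
  classical
  conv_rhs => rw [← (EuclideanSpace.basisFun (Fin d) ℝ).sum_repr' (∇ f x)]
  simp only [map_sum, map_smul, smul_eq_mul, EuclideanSpace.basisFun_apply, ← toDual_gradient,
    toDual_apply_apply, real_inner_comm]

lemma lap_eq_sum_fderiv_fderiv (hf : ContDiff ℝ 2 f) (x : EuclideanSpace ℝ (Fin d)) :
    lap f x = ∑ i, fderiv ℝ (fun y => fderiv ℝ f y (𝐞 i)) x (𝐞 i) := by
  have hd : DifferentiableAt ℝ (fderiv ℝ f) x :=
    (hf.fderiv_right (m := 1) le_rfl).differentiable one_ne_zero x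
  refine Finset.sum_congr rfl fun i _ => ?_
  rw [iteratedFDeriv_two_apply, fderiv_clm_apply hd (differentiableAt_const _)]
  simp

lemma continuous_lap (hf : ContDiff ℝ 2 f) : Continuous (lap f) :=
  continuous_finsetSum _ fun _ _ =>
    (ContinuousMultilinearMap.uniformContinuous_eval_const _).continuous.comp
      (hf.continuous_iteratedFDeriv le_rfl)

lemma sum_fderiv_mul_fderiv_single (hf : ContDiff ℝ 2 f) (hw : ContDiff ℝ 1 w)
    (x : EuclideanSpace ℝ (Fin d)) :
    ∑ i, fderiv ℝ (fun y => w y * fderiv ℝ f y (𝐞 i)) x (𝐞 i) =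
      w x * lap f x + fderiv ℝ w x (∇ f x) := by
  have hq : ∀ i, DifferentiableAt ℝ (fun y => fderiv ℝ f y (𝐞 i)) x := fun i =>
    ((hf.fderiv_right (m := 1) le_rfl).clm_apply contDiff_const).differentiable one_ne_zero x
  have hprod : ∀ i, fderiv ℝ (fun y => w y * fderiv ℝ f y (𝐞 i)) x (𝐞 i) =
      w x * fderiv ℝ (fun y => fderiv ℝ f y (𝐞 i)) x (𝐞 i) +
        fderiv ℝ f x (𝐞 i) * fderiv ℝ w x (𝐞 i) := fun i => by
    rw [fderiv_fun_mul (hw.differentiable one_ne_zero x) (hq i)]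
    simp only [add_apply, smul_apply, smul_eq_mul]
  rw [Finset.sum_congr rfl fun i _ => hprod i, Finset.sum_add_distrib, ← Finset.mul_sum,
    ← lap_eq_sum_fderiv_fderiv hf, sum_fderiv_single_mul_apply]

lemma sum_fderiv_comp_single_mul (hf : Differentiable ℝ f) (hφ : Differentiable ℝ φ)
    (x : EuclideanSpace ℝ (Fin d)) :
    ∑ i, fderiv ℝ (φ ∘ f) x (𝐞 i) * (w x * fderiv ℝ f x (𝐞 i)) =
      deriv φ (f x) * w x * ‖∇ f x‖ ^ 2 := by
  rw [((hφ _).hasDerivAt.comp_hasFDerivAt x (hf x).hasFDerivAt).fderiv,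
    ← fderiv_apply_gradient, ← sum_fderiv_single_mul_apply, Finset.mul_sum]
  refine Finset.sum_congr rfl fun i _ => ?_
  simp only [smul_apply, smul_eq_mul]
  ring

theorem integral_comp_mul_divergence_nonneg (hf : ContDiff ℝ 2 f) (hw : ContDiff ℝ 1 w)
    (hw0 : ∀ x, 0 ≤ w x) (hφ : ContDiff ℝ 1 φ) (hφ_anti : Antitone φ)
    (hφf : HasCompactSupport (φ ∘ f)) :
    0 ≤ ∫ x, φ (f x) * (w x * lap f x + fderiv ℝ w x (∇ f x)) := by
  set G : Fin d → EuclideanSpace ℝ (Fin d) → ℝ := fun i y => w y * fderiv ℝ f y (𝐞 i)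
  have hG : ∀ i, ContDiff ℝ 1 (G i) := fun i =>
    hw.mul ((hf.fderiv_right (m := 1) le_rfl).clm_apply contDiff_const)
  have hη : ContDiff ℝ 1 (φ ∘ f) := hφ.comp (hf.of_le one_le_two)
  have hint_left : ∀ i, Integrable fun x => φ (f x) * fderiv ℝ (G i) x (𝐞 i) := fun i =>
    (hη.continuous.mul (((hG i).continuous_fderiv one_ne_zero).clm_apply
      continuous_const)).integrable_of_hasCompactSupport hφf.mul_right
  have hint_right : ∀ i, Integrable fun x => fderiv ℝ (φ ∘ f) x (𝐞 i) * G i x := fun i =>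
    (((hη.continuous_fderiv one_ne_zero).clm_apply continuous_const).mul
      (hG i).continuous).integrable_of_hasCompactSupport (hφf.fderiv_apply ℝ (𝐞 i)).mul_right
  have hibp : ∀ i, ∫ x, φ (f x) * fderiv ℝ (G i) x (𝐞 i) =
      -∫ x, fderiv ℝ (φ ∘ f) x (𝐞 i) * G i x := fun i =>
    integral_mul_fderiv_eq_neg_fderiv_mul_of_integrable (hint_right i) (hint_left i)
      ((hη.continuous.mul (hG i).continuous).integrable_of_hasCompactSupport hφf.mul_right)
      (fun x _ => hη.differentiable one_ne_zero x)
      (fun x _ => (hG i).differentiable one_ne_zero x)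
  calc 0 ≤ -∫ x, deriv φ (f x) * w x * ‖∇ f x‖ ^ 2 :=
        neg_nonneg.mpr <| integral_nonpos fun x =>
          mul_nonpos_of_nonpos_of_nonneg (mul_nonpos_of_nonpos_of_nonneg
            hφ_anti.deriv_nonpos (hw0 x)) (sq_nonneg _)
    _ = ∑ i, -∫ x, fderiv ℝ (φ ∘ f) x (𝐞 i) * G i x := by
        rw [Finset.sum_neg_distrib, ← integral_finsetSum _ fun i _ => hint_right i]
        simp only [G, sum_fderiv_comp_single_mul (hf.differentiable two_ne_zero)
          (hφ.differentiable one_ne_zero)]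
    _ = ∫ x, φ (f x) * (w x * lap f x + fderiv ℝ w x (∇ f x)) := by
        rw [← Finset.sum_congr rfl fun i _ => hibp i,
          ← integral_finsetSum _ fun i _ => hint_left i]
        simp only [← Finset.mul_sum, G, sum_fderiv_mul_fderiv_single hf hw]

end Euclidean

section Cutoff

noncomputable def sublevelCutoff (t : ℝ) (n : ℕ) (y : ℝ) : ℝ :=
  smoothTransition ((t - y) * (n + 1) + 1)

variable {t : ℝ} {n : ℕ}

lemma contDiff_sublevelCutoff : ContDiff ℝ 1 (sublevelCutoff t n) :=
  smoothTransition.contDiff.comp (by fun_prop)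

lemma antitone_sublevelCutoff : Antitone (sublevelCutoff t n) :=
  smoothTransition.monotone.comp_antitone fun y z hyz => by
    nlinarith [(n.cast_nonneg : (0 : ℝ) ≤ n)]

lemma abs_sublevelCutoff_le_one (y : ℝ) : |sublevelCutoff t n y| ≤ 1 :=
  (abs_of_nonneg (smoothTransition.nonneg _)).trans_le (smoothTransition.le_one _)

lemma sublevelCutoff_eq_one_of_le {y : ℝ} (hy : y ≤ t) : sublevelCutoff t n y = 1 :=
  smoothTransition.one_of_one_le <| by
    nlinarith [(n.cast_nonneg : (0 : ℝ) ≤ n)]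

lemma sublevelCutoff_eq_zero_of_one_le {y : ℝ} (hn : 1 ≤ (y - t) * (n + 1)) :
    sublevelCutoff t n y = 0 :=
  smoothTransition.zero_of_nonpos <| by linarith

lemma sublevelCutoff_eq_zero_of_add_one_le {y : ℝ} (hy : t + 1 ≤ y) : sublevelCutoff t n y = 0 :=
  sublevelCutoff_eq_zero_of_one_le <| by nlinarith [(n.cast_nonneg : (0 : ℝ) ≤ n)]

lemma tendsto_sublevelCutoff (y : ℝ) :
    Tendsto (fun n => sublevelCutoff t n y) atTop (𝓝 ((Set.Iic t).indicator 1 y)) := by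
  by_cases hy : y ≤ t
  · simp only [sublevelCutoff_eq_one_of_le hy, Set.indicator_of_mem (Set.mem_Iic.mpr hy),
      Pi.one_apply, tendsto_const_nhds]
  · rw [Set.indicator_of_notMem (show y ∉ Set.Iic t from hy)]
    have hpos : 0 < y - t := by linarith [not_le.mp hy]
    obtain ⟨N, hN⟩ := exists_nat_ge (1 / (y - t))
    refine tendsto_const_nhds.congr' (eventually_atTop.mpr ⟨N, fun n hn => ?_⟩)
    refine (sublevelCutoff_eq_zero_of_one_le ?_).symm
    rw [div_le_iff₀ hpos] at hN
    nlinarith [(Nat.cast_le.mpr hn : (N : ℝ) ≤ n)]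

end Cutoff

section Sublevel

variable {d : ℕ} {f w : EuclideanSpace ℝ (Fin d) → ℝ}

theorem setIntegral_sublevel_divergence_nonneg (hf : ContDiff ℝ 2 f) {t : ℝ}
    (hK : IsCompact (f ⁻¹' Set.Iic (t + 1))) (hw : ContDiff ℝ 1 w) (hw0 : ∀ x, 0 ≤ w x) :
    0 ≤ ∫ x in f ⁻¹' Set.Iic t, (w x * lap f x + fderiv ℝ w x (∇ f x)) := by
  set Φ := fun x => w x * lap f x + fderiv ℝ w x (∇ f x)
  have hΦ : Continuous Φ := (hw.continuous.mul (continuous_lap hf)).add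
    ((hw.continuous_fderiv one_ne_zero).clm_apply (continuous_gradient (hf.of_le one_le_two)))
  have hmeas : MeasurableSet (f ⁻¹' Set.Iic t) :=
    measurableSet_Iic.preimage hf.continuous.measurable
  have hbound : ∀ n, ∀ᵐ x, ‖sublevelCutoff t n (f x) * Φ x‖ ≤
      (f ⁻¹' Set.Iic (t + 1)).indicator (fun x => |Φ x|) x := fun n => ae_of_all _ fun x => by
    by_cases hx : x ∈ f ⁻¹' Set.Iic (t + 1)
    · rw [Set.indicator_of_mem hx, norm_mul, Real.norm_eq_abs, Real.norm_eq_abs]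
      exact mul_le_of_le_one_left (abs_nonneg _) (abs_sublevelCutoff_le_one _)
    · rw [Set.indicator_of_notMem hx, sublevelCutoff_eq_zero_of_add_one_le
        (not_le.mp hx).le, zero_mul, norm_zero]
  have hlim : ∀ᵐ x, Tendsto (fun n => sublevelCutoff t n (f x) * Φ x) atTop
      (𝓝 ((f ⁻¹' Set.Iic t).indicator Φ x)) := ae_of_all _ fun x => by
    convert (tendsto_sublevelCutoff (f x)).mul_const (Φ x) using 2
    by_cases hx : f x ≤ t <;> simp [Set.indicator, hx]
  have htendsto := tendsto_integral_of_dominated_convergence _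
    (fun n => ((contDiff_sublevelCutoff.continuous.comp hf.continuous).mul
      hΦ).aestronglyMeasurable)
    ((hΦ.abs.continuousOn.integrableOn_compact hK).integrable_indicator
      (measurableSet_Iic.preimage hf.continuous.measurable)) hbound hlim
  rw [integral_indicator hmeas] at htendsto
  refine ge_of_tendsto' htendsto fun n => integral_comp_mul_divergence_nonneg hf hw hw0
    contDiff_sublevelCutoff antitone_sublevelCutoff (HasCompactSupport.intro hK fun x hx => ?_)
  exact sublevelCutoff_eq_zero_of_add_one_le (not_le.mp hx).le

end Sublevel

section ExponentialMoments

variable {d : ℕ} {f : EuclideanSpace ℝ (Fin d) → ℝ}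

lemma fderiv_exp_neg_mul_apply_gradient (hf : Differentiable ℝ f) (s : ℝ)
    (x : EuclideanSpace ℝ (Fin d)) :
    fderiv ℝ (fun y => exp (-(s * f y))) x (∇ f x) = -s * exp (-(s * f x)) * ‖∇ f x‖ ^ 2 := by
  rw [((hf x).hasFDerivAt.const_mul s).fun_neg.exp.fderiv]
  simp only [smul_apply, neg_apply, smul_eq_mul, fderiv_apply_gradient]
  ring

theorem mul_setIntegral_sq_norm_gradient_mul_exp_le (hf : ContDiff ℝ 2 f)
    (hK : ∀ c, IsCompact (f ⁻¹' Set.Iic c)) (s t : ℝ) :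
    s * ∫ x in f ⁻¹' Set.Iic t, ‖∇ f x‖ ^ 2 * exp (-(s * f x)) ≤
      ∫ x in f ⁻¹' Set.Iic t, lap f x * exp (-(s * f x)) := by
  have hw : ContDiff ℝ 1 fun y => exp (-(s * f y)) :=
    contDiff_exp.comp (contDiff_const.mul (hf.of_le one_le_two)).neg
  have hdiv := setIntegral_sublevel_divergence_nonneg hf (hK (t + 1)) hw fun _ => (exp_pos _).le
  have hint : ∀ g : EuclideanSpace ℝ (Fin d) → ℝ, Continuous g →
      IntegrableOn g (f ⁻¹' Set.Iic t) := fun g hg => hg.continuousOn.integrableOn_compact (hK t)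
  simp only [fderiv_exp_neg_mul_apply_gradient (hf.differentiable two_ne_zero)] at hdiv
  have he : Continuous fun y => exp (-(s * f y)) := hw.continuous
  have hsplit : ∫ x in f ⁻¹' Set.Iic t,
        (exp (-(s * f x)) * lap f x + -s * exp (-(s * f x)) * ‖∇ f x‖ ^ 2) =
      (∫ x in f ⁻¹' Set.Iic t, lap f x * exp (-(s * f x))) -
        s * ∫ x in f ⁻¹' Set.Iic t, ‖∇ f x‖ ^ 2 * exp (-(s * f x)) := by
    rw [← integral_const_mul, ← integral_sub]
    · congr 1 with x
      ring
    · exact hint _ ((continuous_lap hf).mul he)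
    · exact hint _ (continuous_const.mul
        (((continuous_gradient (hf.of_le one_le_two)).norm.pow 2).mul he))
  linarith

theorem mul_setIntegral_mul_exp_le (hf : ContDiff ℝ 2 f) (hK : ∀ c, IsCompact (f ⁻¹' Set.Iic c))
    {α β a : ℝ} (h1 : ∀ x, lap f x - α * ‖∇ f x‖ ^ 2 + β * f x ≤ a) (h2 : ∀ x, lap f x ≤ a)
    (t : ℝ) {s : ℝ} (hs : 0 ≤ s) (hsα : s ≤ α) :
    s * (β * ∫ x in f ⁻¹' Set.Iic t, f x * exp (-(s * f x))) ≤
      α * a * ∫ x in f ⁻¹' Set.Iic t, exp (-(s * f x)) := by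
  set D := f ⁻¹' Set.Iic t
  have hint : ∀ g : EuclideanSpace ℝ (Fin d) → ℝ, Continuous g → IntegrableOn g D :=
    fun g hg => hg.continuousOn.integrableOn_compact (hK t)
  have hmeas : MeasurableSet D := measurableSet_Iic.preimage hf.continuous.measurable
  have hfc : Continuous f := hf.continuous
  have hlap : Continuous (lap f) := continuous_lap hf
  have hgrad : Continuous (∇ f) := continuous_gradient (hf.of_le one_le_two)
  have hgrad_weight := mul_setIntegral_sq_norm_gradient_mul_exp_le hf hK s t
  have hlap_weight : ∫ x in D, lap f x * exp (-(s * f x)) ≤ a * ∫ x in D, exp (-(s * f x)) := by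
    rw [← integral_const_mul]
    exact setIntegral_mono_on (hint _ (by fun_prop)) (hint _ (by fun_prop)) hmeas
      fun x _ => mul_le_mul_of_nonneg_right (h2 x) (exp_pos _).le
  have h1_weight : ∫ x in D, (β * f x + lap f x - α * ‖∇ f x‖ ^ 2) * exp (-(s * f x)) ≤
      a * ∫ x in D, exp (-(s * f x)) := by
    rw [← integral_const_mul]
    exact setIntegral_mono_on (hint _ (by fun_prop)) (hint _ (by fun_prop)) hmeas
      fun x _ => mul_le_mul_of_nonneg_right (by linarith [h1 x]) (exp_pos _).le
  have hsplit : ∫ x in D, (β * f x + lap f x - α * ‖∇ f x‖ ^ 2) * exp (-(s * f x)) =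
      β * (∫ x in D, f x * exp (-(s * f x))) + (∫ x in D, lap f x * exp (-(s * f x))) -
        α * ∫ x in D, ‖∇ f x‖ ^ 2 * exp (-(s * f x)) := by
    rw [← integral_const_mul, ← integral_const_mul, ← integral_add, ← integral_sub]
    · congr 1 with x
      ring
    all_goals exact hint _ (by fun_prop)
  rw [hsplit] at h1_weight
  nlinarith [mul_le_mul_of_nonneg_left h1_weight hs,
    mul_le_mul_of_nonneg_left hgrad_weight (hs.trans hsα),
    mul_le_mul_of_nonneg_left hlap_weight (sub_nonneg.mpr hsα)]

end ExponentialMoments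

section LaplaceTransform

variable {X : Type*} [TopologicalSpace X] [T2Space X] [MeasurableSpace X] [OpensMeasurableSpace X]
  {μ : Measure X} [IsFiniteMeasureOnCompacts μ] {f : X → ℝ} {K : Set X}

theorem hasDerivAt_setIntegral_exp_neg_mul (hf : Continuous f) (hK : IsCompact K) (σ : ℝ) :
    HasDerivAt (fun s => ∫ x in K, exp (-(s * f x)) ∂μ)
      (-∫ x in K, f x * exp (-(σ * f x)) ∂μ) σ := by
  have hint : ∀ g : X → ℝ, Continuous g → Integrable g (μ.restrict K) :=
    fun g hg => hg.continuousOn.integrableOn_compact hK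
  have hbound : ∀ x, ∀ s ∈ Metric.ball σ 1,
      ‖-(f x * exp (-(s * f x)))‖ ≤ |f x| * exp ((|σ| + 1) * |f x|) := fun x s hs => by
    have hs' : |s| ≤ |σ| + 1 := by
      have := abs_sub_abs_le_abs_sub s σ
      rw [Metric.mem_ball, Real.dist_eq] at hs
      linarith
    rw [norm_neg, norm_mul, Real.norm_eq_abs, Real.norm_of_nonneg (exp_pos _).le]
    gcongr
    calc -(s * f x) ≤ |s| * |f x| := by rw [← abs_mul]; exact neg_le_abs _
      _ ≤ (|σ| + 1) * |f x| := by gcongr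
  have key := hasDerivAt_integral_of_dominated_loc_of_deriv_le (μ := μ.restrict K)
    (F' := fun s x => -(f x * exp (-(s * f x)))) (Metric.ball_mem_nhds σ one_pos)
    (Eventually.of_forall fun s => (by fun_prop : Continuous fun x => exp (-(s * f x)))
      |>.aestronglyMeasurable)
    (hint _ (by fun_prop)) (by fun_prop : Continuous _).aestronglyMeasurable
    (ae_of_all _ hbound) (hint _ (by fun_prop))
    (ae_of_all _ fun x s _ => by
      simpa [mul_comm] using ((hasDerivAt_mul_const (f x)).neg.exp : HasDerivAt _ _ s))
  simpa only [integral_neg] using key.2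

lemma measureReal_sublevel_le_exp_mul_setIntegral (hf : Continuous f) {t : ℝ}
    (hK : IsCompact (f ⁻¹' Set.Iic t)) {s : ℝ} (hs : 0 ≤ s) :
    μ.real (f ⁻¹' Set.Iic t) ≤ exp (s * t) * ∫ x in f ⁻¹' Set.Iic t, exp (-(s * f x)) ∂μ := by
  rw [← integral_const_mul, ← setIntegral_one_eq_measureReal]
  refine setIntegral_mono_on (integrableOn_const hK.measure_lt_top.ne)
    ((by fun_prop : Continuous _).continuousOn.integrableOn_compact hK)
    (measurableSet_Iic.preimage hf.measurable) fun x hx => ?_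
  rw [← exp_add, one_le_exp_iff]
  nlinarith [show f x ≤ t from hx]

end LaplaceTransform

lemma rpow_mul_le_rpow_mul_of_hasDerivAt {h h' : ℝ → ℝ} {c s₀ s₁ : ℝ} (hs₀ : 0 < s₀)
    (hs : s₀ ≤ s₁) (hd : ∀ s ∈ Set.Icc s₀ s₁, HasDerivAt h (h' s) s)
    (hineq : ∀ s ∈ Set.Icc s₀ s₁, -(s * h' s) ≤ c * h s) :
    s₀ ^ c * h s₀ ≤ s₁ ^ c * h s₁ := by
  have hF : ∀ s ∈ Set.Icc s₀ s₁,
      HasDerivAt (fun s => s ^ c * h s) (c * s ^ (c - 1) * h s + s ^ c * h' s) s :=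
    fun s hs => ((hasDerivAt_rpow_const (Or.inl (hs₀.trans_le hs.1).ne')).mul (hd s hs))
  refine monotoneOn_of_hasDerivWithinAt_nonneg (convex_Icc s₀ s₁)
    (fun s hs => (hF s hs).continuousAt.continuousWithinAt)
    (fun s hs => (hF s (interior_subset hs)).hasDerivWithinAt) (fun s hs => ?_)
    (Set.left_mem_Icc.mpr hs) (Set.right_mem_Icc.mpr hs) hs
  have hs' := interior_subset hs
  have hpos : 0 < s := hs₀.trans_le hs'.1
  have hfactor : c * s ^ (c - 1) * h s + s ^ c * h' s = s ^ (c - 1) * (c * h s + s * h' s) := by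
    rw [show s ^ c = s ^ (c - 1) * s by rw [← rpow_add_one hpos.ne', sub_add_cancel]]
    ring
  rw [hfactor]
  exact mul_nonneg (rpow_nonneg hpos.le _) (by linarith [hineq s hs'])

theorem measureReal_sublevel_le_rpow_mul {d : ℕ} {f : EuclideanSpace ℝ (Fin d) → ℝ}
    (hf : ContDiff ℝ 2 f) (hK : ∀ c, IsCompact (f ⁻¹' Set.Iic c)) {α β a : ℝ} (hβ : 0 < β)
    (h1 : ∀ x, lap f x - α * ‖∇ f x‖ ^ 2 + β * f x ≤ a) (h2 : ∀ x, lap f x ≤ a)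
    (t : ℝ) {s : ℝ} (hs : 0 < s) (hsα : s ≤ α) :
    volume.real (f ⁻¹' Set.Iic t) ≤
      exp (s * t) * (α / s) ^ (α * a / β) * ∫ x in f ⁻¹' Set.Iic t, exp (-(α * f x)) := by
  have hmono := rpow_mul_le_rpow_mul_of_hasDerivAt (c := α * a / β) hs hsα
    (fun σ _ => hasDerivAt_setIntegral_exp_neg_mul hf.continuous (hK t) σ) fun σ hσ => by
      have := mul_setIntegral_mul_exp_le hf hK h1 h2 t (hs.le.trans hσ.1) hσ.2
      rw [mul_neg, neg_neg, div_mul_eq_mul_div, le_div_iff₀ hβ]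
      linarith
  have hlaplace : ∫ x in f ⁻¹' Set.Iic t, exp (-(s * f x)) ≤
      (α / s) ^ (α * a / β) * ∫ x in f ⁻¹' Set.Iic t, exp (-(α * f x)) := by
    rw [div_rpow (hs.le.trans hsα) hs.le, div_mul_eq_mul_div, le_div_iff₀ (rpow_pos_of_pos hs _),
      mul_comm]
    exact hmono
  calc volume.real (f ⁻¹' Set.Iic t)
      ≤ exp (s * t) * ∫ x in f ⁻¹' Set.Iic t, exp (-(s * f x)) :=
        measureReal_sublevel_le_exp_mul_setIntegral hf.continuous (hK t) hs.le
    _ ≤ _ := by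
        rw [mul_assoc]
        exact mul_le_mul_of_nonneg_left hlaplace (exp_pos _).le

lemma isCompact_preimage_Iic_of_nonneg {X : Type*} [TopologicalSpace X] {f : X → ℝ}
    (hf0 : ∀ x, 0 ≤ f x) (hproper : ∀ K : Set ℝ, IsCompact K → IsCompact (f ⁻¹' K)) (c : ℝ) :
    IsCompact (f ⁻¹' Set.Iic c) := by
  convert hproper _ (isCompact_Icc (a := 0) (b := c)) using 1
  ext x
  simp [hf0 x]

lemma two_mul_sqrt_le_iff {y β r : ℝ} (hy : 0 ≤ y) (hβ : 0 ≤ β) (hr : 0 ≤ r) :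
    2 * √y ≤ √(2 * β) * r ↔ y ≤ β * r ^ 2 / 2 := by
  rw [← pow_le_pow_iff_left₀ (by positivity) (by positivity) two_ne_zero, mul_pow, mul_pow,
    sq_sqrt hy, sq_sqrt (by positivity)]
  constructor <;> intro h <;> linarith

theorem volume_sublevel_le {d : ℕ} (f : EuclideanSpace ℝ (Fin d) → ℝ)
    (hf : ContDiff ℝ 2 f) (hf0 : ∀ x, 0 ≤ f x)
    (hproper : ∀ K : Set ℝ, IsCompact K → IsCompact (f ⁻¹' K))
    (α β a : ℝ) (hα : 0 < α) (hβ : 0 < β)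
    (h1 : ∀ x, lap f x - α * ‖∇ f x‖ ^ 2 + β * f x ≤ a)
    (h2 : ∀ x, lap f x ≤ a)
    (r : ℝ) (hr : 1 ≤ r) :
    volume {x : EuclideanSpace ℝ (Fin d) | 2 * Real.sqrt (f x) ≤ Real.sqrt (2 * β) * r} ≤
      ENNReal.ofReal (Real.exp (α * β / 2) * r ^ (2 * α * a / β)) *
        ∫⁻ x in {x : EuclideanSpace ℝ (Fin d) | 2 * Real.sqrt (f x) ≤ Real.sqrt (2 * β) * r},
          ENNReal.ofReal (Real.exp (-α * f x)) := by
  have hr0 : 0 < r := one_pos.trans_le hr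
  have hK := isCompact_preimage_Iic_of_nonneg hf0 hproper
  have hD : {x | 2 * √(f x) ≤ √(2 * β) * r} = f ⁻¹' Set.Iic (β * r ^ 2 / 2) :=
    Set.ext fun x => two_mul_sqrt_le_iff (hf0 x) hβ.le hr0.le
  have hreal := measureReal_sublevel_le_rpow_mul hf hK hβ h1 h2 (β * r ^ 2 / 2)
    (by positivity : 0 < α / r ^ 2) (div_le_self hα.le (one_le_pow₀ hr))
  have hexp : α / r ^ 2 * (β * r ^ 2 / 2) = α * β / 2 := by
    field_simp
  have hrpow : (α / (α / r ^ 2)) ^ (α * a / β) = r ^ (2 * α * a / β) := by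
    rw [div_div_cancel₀ hα.ne', ← rpow_natCast, ← rpow_mul hr0.le]
    ring_nf
  rw [hexp, hrpow] at hreal
  simp only [hD, neg_mul]
  rw [← ofReal_integral_eq_lintegral_ofReal
      ((by fun_prop : Continuous _).continuousOn.integrableOn_compact (hK _))
      (ae_of_all _ fun _ => (exp_pos _).le),
    ← ENNReal.ofReal_mul (by positivity), ← ofReal_measureReal (hK _).measure_lt_top.ne]
  exact ENNReal.ofReal_le_ofReal hreal
end

section
/- Let s ≥ 0 and r₀ > 0, and let V, η, χ : [r₀, ∞) → ℝ be differentiable functions such that V, η, χ are nonnegative, η and χ are nondecreasing, and for all r ≥ r₀ one has r·V′(r) − s·V(r) ≤ (4/r)·η′(r) − η(r) + (4/r)·χ′(r) − χ(r) and η(r) + χ(r) ≤ s·V(r). Then for all r₂ ≥ r₁ ≥ max{r₀, 2√(s+2)}, r₂^{−s}·V(r₂) − r₁^{−s}·V(r₁) ≤ 4s·r₂^{−s−2}·V(r₂). -/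
theorem volume_monotonicity_lemma (s r₀ : ℝ) (hs : 0 ≤ s) (hr₀ : 0 < r₀)
    (V η χ : ℝ → ℝ)
    (hVd : ∀ r, r₀ ≤ r → DifferentiableAt ℝ V r)
    (hηd : ∀ r, r₀ ≤ r → DifferentiableAt ℝ η r)
    (hχd : ∀ r, r₀ ≤ r → DifferentiableAt ℝ χ r)
    (hV0 : ∀ r, r₀ ≤ r → 0 ≤ V r)
    (hη0 : ∀ r, r₀ ≤ r → 0 ≤ η r)
    (hχ0 : ∀ r, r₀ ≤ r → 0 ≤ χ r)
    (hηmono : ∀ r t, r₀ ≤ r → r ≤ t → η r ≤ η t)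
    (hχmono : ∀ r t, r₀ ≤ r → r ≤ t → χ r ≤ χ t)
    (hineq : ∀ r, r₀ ≤ r →
      r * deriv V r - s * V r ≤
        4 / r * deriv η r - η r + (4 / r * deriv χ r - χ r))
    (hbound : ∀ r, r₀ ≤ r → η r + χ r ≤ s * V r) :
    ∀ r₁ r₂ : ℝ, max r₀ (2 * Real.sqrt (s + 2)) ≤ r₁ → r₁ ≤ r₂ →
      r₂ ^ (-s) * V r₂ - r₁ ^ (-s) * V r₁ ≤ 4 * s * r₂ ^ (-s - 2) * V r₂ := by
  intro r₁ r₂ h1 h12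
  have hr₀1 : r₀ ≤ r₁ := le_trans (le_max_left _ _) h1
  have hc1 : 2 * Real.sqrt (s + 2) ≤ r₁ := le_trans (le_max_right _ _) h1
  have hr₁pos : 0 < r₁ := lt_of_lt_of_le hr₀ hr₀1
  have hr₂pos : 0 < r₂ := lt_of_lt_of_le hr₁pos h12
  have hsq : ∀ x : ℝ, r₁ ≤ x → 4 * (s + 2) ≤ x ^ 2 := by
    intro x hx
    have h2 : 2 * Real.sqrt (s + 2) ≤ x := le_trans hc1 hx
    have hpos : (0:ℝ) ≤ 2 * Real.sqrt (s + 2) := by positivity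
    have := mul_self_le_mul_self hpos h2
    have hs2 : Real.sqrt (s + 2) ^ 2 = s + 2 := Real.sq_sqrt (by linarith)
    nlinarith [this, hs2]
  set G : ℝ → ℝ := fun r => η r + χ r with hG
  set Φ : ℝ → ℝ := fun r => r ^ (-s) * V r - 4 * (r ^ (-s - 2) * G r) with hΦ
  -- Differentiability / HasDerivAt on [r₁, r₂]
  have hΦderiv : ∀ x, r₁ ≤ x →
      HasDerivAt Φ
        ((-s) * x ^ (-s - 1) * V x + x ^ (-s) * deriv V x
          - 4 * (((-s - 2) * x ^ (-s - 3)) * G x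
              + x ^ (-s - 2) * (deriv η x + deriv χ x))) x := by
    intro x hx
    have hr₀x : r₀ ≤ x := le_trans hr₀1 hx
    have hx0 : 0 < x := lt_of_lt_of_le hr₁pos hx
    have hp1 : HasDerivAt (fun r : ℝ => r ^ (-s)) ((-s) * x ^ (-s - 1)) x := by
      have := Real.hasDerivAt_rpow_const (p := -s) (Or.inl hx0.ne')
      simpa [sub_eq_add_neg] using this
    have hp2 : HasDerivAt (fun r : ℝ => r ^ (-s - 2)) ((-s - 2) * x ^ (-s - 3)) x := by
      have := Real.hasDerivAt_rpow_const (p := -s - 2) (Or.inl hx0.ne')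
      have he : (-s - 2 - 1 : ℝ) = -s - 3 := by ring
      simpa [he] using this
    have hVx := (hVd x hr₀x).hasDerivAt
    have hGx : HasDerivAt G (deriv η x + deriv χ x) x :=
      (hηd x hr₀x).hasDerivAt.add (hχd x hr₀x).hasDerivAt
    exact (hp1.mul hVx).sub (((hp2.mul hGx)).const_mul 4)
  -- derivative nonpositivity
  have hΦ' : ∀ x, r₁ ≤ x → deriv Φ x ≤ 0 := by
    intro x hx
    have hr₀x : r₀ ≤ x := le_trans hr₀1 hx
    have hx0 : 0 < x := lt_of_lt_of_le hr₁pos hx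
    rw [(hΦderiv x hx).deriv]
    set a : ℝ := x ^ (-s - 3) with ha
    have hapos : 0 < a := Real.rpow_pos_of_pos hx0 _
    have e1 : x ^ (-s) = a * x ^ 3 := by
      rw [ha, ← Real.rpow_natCast x 3, ← Real.rpow_add hx0]
      norm_num
    have e2 : x ^ (-s - 1) = a * x ^ 2 := by
      rw [ha, ← Real.rpow_natCast x 2, ← Real.rpow_add hx0]
      congr 1
      push_cast; ring
    have e3 : x ^ (-s - 2) = a * x := by
      rw [ha, ← Real.rpow_add_one hx0.ne']
      congr 1
      ring
    have key := hineq x hr₀x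
    have hGpos : 0 ≤ G x := add_nonneg (hη0 x hr₀x) (hχ0 x hr₀x)
    have hx2 := hsq x hx
    set E' : ℝ := deriv η x + deriv χ x with hE
    have key2 : x * deriv V x - s * V x ≤ 4 / x * E' - G x := by
      simp only [hE, hG]; linarith [key]
    have k3 : a * x ^ 2 * (x * deriv V x - s * V x) ≤ a * x ^ 2 * (4 / x * E' - G x) :=
      mul_le_mul_of_nonneg_left key2 (by positivity)
    have k4 : a * x ^ 2 * (4 / x * E' - G x) = 4 * a * x * E' - a * x ^ 2 * G x := by
      field_simp
    have k5 : a * x ^ 2 * (x * deriv V x - s * V x) ≤ 4 * a * x * E' - a * x ^ 2 * G x := by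
      exact le_of_le_of_eq k3 k4
    rw [e1, e2, e3]
    nlinarith [k5, mul_le_mul_of_nonneg_left hx2 (mul_nonneg hapos.le hGpos)]
  -- antitone
  have hanti : AntitoneOn Φ (Set.Icc r₁ r₂) := by
    apply antitoneOn_of_deriv_nonpos (convex_Icc r₁ r₂)
    · intro x hx
      exact ((hΦderiv x hx.1).differentiableAt).continuousAt.continuousWithinAt
    · intro x hx
      rw [interior_Icc] at hx
      exact ((hΦderiv x hx.1.le).differentiableAt).differentiableWithinAt
    · intro x hx
      rw [interior_Icc] at hx
      exact hΦ' x hx.1.le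
  have hΦle : Φ r₂ ≤ Φ r₁ :=
    hanti (Set.left_mem_Icc.2 h12) (Set.right_mem_Icc.2 h12) h12
  have hG1 : 0 ≤ η r₁ + χ r₁ := add_nonneg (hη0 r₁ hr₀1) (hχ0 r₁ hr₀1)
  have hr₀2 : r₀ ≤ r₂ := le_trans hr₀1 h12
  have hG2 : η r₂ + χ r₂ ≤ s * V r₂ := hbound r₂ hr₀2
  have hp1 : 0 < r₁ ^ (-s - 2) := Real.rpow_pos_of_pos hr₁pos _
  have hp2 : 0 < r₂ ^ (-s - 2) := Real.rpow_pos_of_pos hr₂pos _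
  simp only [hΦ, hG] at hΦle
  nlinarith [mul_nonneg hp1.le hG1, mul_le_mul_of_nonneg_left hG2 hp2.le, hΦle]
end

section
/- Let s ≥ 0 and r₀ > 0, and let V, η, χ : [r₀, ∞) → ℝ be differentiable functions such that V, η, χ are nonnegative, η and χ are nondecreasing, and for all r ≥ r₀ one has r·V′(r) − s·V(r) ≤ (4/r)·η′(r) − η(r) + (4/r)·χ′(r) − χ(r) and η(r) + χ(r) ≤ s·V(r). Set r₁ = max{r₀, 2√(s+2)}. Then for all r ≥ r₁, V(r) ≤ [V(r₁) / ((1 − 4s·r₁^{−2})·r₁^{s})] · r^{s}; in particular V grows at most polynomially of order s. (Note 4s·r₁^{−2} ≤ s/(s+2) < 1, so the constant is well defined and positive.) -/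
set_option maxHeartbeats 1000000 in
theorem polynomial_growth_lemma (s r₀ : ℝ) (hs : 0 ≤ s) (hr₀ : 0 < r₀)
    (V η χ : ℝ → ℝ)
    (hVd : ∀ r, r₀ ≤ r → DifferentiableAt ℝ V r)
    (hηd : ∀ r, r₀ ≤ r → DifferentiableAt ℝ η r)
    (hχd : ∀ r, r₀ ≤ r → DifferentiableAt ℝ χ r)
    (hV0 : ∀ r, r₀ ≤ r → 0 ≤ V r)
    (hη0 : ∀ r, r₀ ≤ r → 0 ≤ η r)
    (hχ0 : ∀ r, r₀ ≤ r → 0 ≤ χ r)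
    (hηmono : ∀ r t, r₀ ≤ r → r ≤ t → η r ≤ η t)
    (hχmono : ∀ r t, r₀ ≤ r → r ≤ t → χ r ≤ χ t)
    (hineq : ∀ r, r₀ ≤ r →
      r * deriv V r - s * V r ≤
        4 / r * deriv η r - η r + (4 / r * deriv χ r - χ r))
    (hbound : ∀ r, r₀ ≤ r → η r + χ r ≤ s * V r) :
    ∀ r : ℝ, max r₀ (2 * Real.sqrt (s + 2)) ≤ r →
      V r ≤
        V (max r₀ (2 * Real.sqrt (s + 2))) /
            ((1 - 4 * s / max r₀ (2 * Real.sqrt (s + 2)) ^ 2) *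
              max r₀ (2 * Real.sqrt (s + 2)) ^ s) *
          r ^ s := by
  set r₁ : ℝ := max r₀ (2 * Real.sqrt (s + 2)) with hr₁def
  have hr₁0 : 0 < r₁ := lt_of_lt_of_le hr₀ (le_max_left _ _)
  have hr₁r₀ : r₀ ≤ r₁ := le_max_left _ _
  have hr₁sq : 4 * (s + 2) ≤ r₁ ^ 2 := by
    have h1 : 2 * Real.sqrt (s + 2) ≤ r₁ := le_max_right _ _
    have h2 : (0:ℝ) ≤ 2 * Real.sqrt (s + 2) := by positivity
    have h3 : (2 * Real.sqrt (s + 2)) ^ 2 = 4 * (s + 2) := by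
      rw [mul_pow, Real.sq_sqrt (by linarith : (0:ℝ) ≤ s + 2)]; ring
    nlinarith
  have hd : 0 < 1 - 4 * s / r₁ ^ 2 := by
    have h1 : (0:ℝ) < r₁ ^ 2 := by positivity
    have : 4 * s / r₁ ^ 2 < 1 := by
      rw [div_lt_one h1]; nlinarith
    linarith
  -- the auxiliary function
  set G : ℝ → ℝ := fun x => η x + χ x with hGdef
  set Φ : ℝ → ℝ := fun x => x ^ (-s) * V x - 4 * (x ^ (-s - 2) * G x) with hΦdef
  -- derivative of Φ at points r ≥ r₁
  have hΦderiv : ∀ r, r₁ ≤ r → HasDerivAt Φ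
      (((-s) * r ^ (-s - 1) * V r + r ^ (-s) * deriv V r) -
        4 * ((-s - 2) * r ^ (-s - 2 - 1) * G r +
          r ^ (-s - 2) * (deriv η r + deriv χ r))) r := by
    intro r hr
    have hrpos : 0 < r := lt_of_lt_of_le hr₁0 hr
    have hr0 : r₀ ≤ r := le_trans hr₁r₀ hr
    have h1 : HasDerivAt (fun x : ℝ => x ^ (-s)) ((-s) * r ^ (-s - 1)) r :=
      Real.hasDerivAt_rpow_const (Or.inl hrpos.ne')
    have h2 : HasDerivAt (fun x : ℝ => x ^ (-s - 2)) ((-s - 2) * r ^ (-s - 2 - 1)) r :=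
      Real.hasDerivAt_rpow_const (Or.inl hrpos.ne')
    have hV' := (hVd r hr0).hasDerivAt
    have hG' : HasDerivAt G (deriv η r + deriv χ r) r :=
      ((hηd r hr0).hasDerivAt).add ((hχd r hr0).hasDerivAt)
    exact (h1.mul hV').sub (((h2.mul hG')).const_mul 4)
  -- Φ is antitone on [r₁, ∞)
  have hΦanti : AntitoneOn Φ (Set.Ici r₁) := by
    apply antitoneOn_of_deriv_nonpos (convex_Ici r₁)
    · intro x hx
      exact ((hΦderiv x hx).differentiableAt).continuousAt.continuousWithinAt
    · intro x hx
      rw [interior_Ici] at hx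
      exact ((hΦderiv x (le_of_lt hx)).differentiableAt).differentiableWithinAt
    · intro r hr
      rw [interior_Ici] at hr
      have hrr : r₁ ≤ r := le_of_lt hr
      have hrpos : 0 < r := lt_of_lt_of_le hr₁0 hrr
      have hr0 : r₀ ≤ r := le_trans hr₁r₀ hrr
      rw [(hΦderiv r hrr).deriv]
      simp only [hGdef]
      -- power identities
      set p : ℝ := r ^ (-s - 3) with hpdef
      have hp : 0 < p := Real.rpow_pos_of_pos hrpos _
      have key : ∀ a : ℝ, r ^ (a + 1) = r ^ a * r := fun a =>
        Real.rpow_add_one hrpos.ne' a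
      have e2 : r ^ (-s - 2) = p * r := by
        rw [show -s - 2 = (-s - 3) + 1 by ring, key]
      have e1 : r ^ (-s - 1) = p * r * r := by
        rw [show -s - 1 = (-s - 3) + 1 + 1 by ring, key, key]
      have e0 : r ^ (-s) = p * r * r * r := by
        rw [show -s = (-s - 3) + 1 + 1 + 1 by ring, key, key, key]
      have e3 : r ^ (-s - 2 - 1) = p := by rw [show -s - 2 - 1 = -s - 3 by ring]
      rw [e0, e1, e2, e3]
      -- clear division in hineq
      have h1 := hineq r hr0
      have h2 : r * (r * deriv V r - s * V r) ≤
          r * (4 / r * deriv η r - η r + (4 / r * deriv χ r - χ r)) :=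
        mul_le_mul_of_nonneg_left h1 hrpos.le
      have h3 : r * (4 / r * deriv η r - η r + (4 / r * deriv χ r - χ r)) =
          4 * deriv η r - r * η r + (4 * deriv χ r - r * χ r) := by
        field_simp
        try ring
      rw [h3] at h2
      have hG : 0 ≤ η r + χ r := add_nonneg (hη0 r hr0) (hχ0 r hr0)
      have hrsq : 4 * (s + 2) ≤ r * r := by nlinarith
      nlinarith [mul_le_mul_of_nonneg_left h2 (mul_pos hp hrpos).le,
        mul_nonneg (mul_nonneg hp.le hG) (sub_nonneg.2 hrsq)]
  -- now conclude
  intro r hr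
  have hrpos : 0 < r := lt_of_lt_of_le hr₁0 hr
  have hr0 : r₀ ≤ r := le_trans hr₁r₀ hr
  have hΦ := hΦanti (Set.self_mem_Ici) hr hr
  -- Φ r ≤ Φ r₁
  have hGr₁ : 0 ≤ G r₁ := add_nonneg (hη0 r₁ hr₁r₀) (hχ0 r₁ hr₁r₀)
  have hGb : G r ≤ s * V r := hbound r hr0
  have hr₁pow : 0 < r₁ ^ (-s - 2) := Real.rpow_pos_of_pos hr₁0 _
  have hA : r ^ (-s) * V r ≤ r₁ ^ (-s) * V r₁ + 4 * (r ^ (-s - 2) * (s * V r)) := by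
    have hrp2 : 0 < r ^ (-s - 2) := Real.rpow_pos_of_pos hrpos _
    have h4 : 4 * (r ^ (-s - 2) * G r) ≤ 4 * (r ^ (-s - 2) * (s * V r)) := by
      nlinarith
    have h5 : 0 ≤ 4 * (r₁ ^ (-s - 2) * G r₁) := by positivity
    simp only [hΦdef] at hΦ
    linarith
  -- convert rpow to pow
  have convr : ∀ x : ℝ, 0 < x → x ^ (-s - 2) = (x ^ s)⁻¹ * (x ^ 2)⁻¹ := by
    intro x hx
    rw [show -s - 2 = -(s + 2) by ring, Real.rpow_neg hx.le, Real.rpow_add hx,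
      mul_inv, show (2:ℝ) = ((2:ℕ):ℝ) by norm_num, Real.rpow_natCast]
  have convn : ∀ x : ℝ, 0 < x → x ^ (-s) = (x ^ s)⁻¹ := fun x hx =>
    Real.rpow_neg hx.le s
  rw [convr r hrpos, convn r hrpos, convn r₁ hr₁0] at hA
  set a : ℝ := r ^ s with hadef
  set b : ℝ := r₁ ^ s with hbdef
  have ha : 0 < a := Real.rpow_pos_of_pos hrpos s
  have hb : 0 < b := Real.rpow_pos_of_pos hr₁0 s
  have hq : (0:ℝ) < r ^ 2 := by positivity
  have hq₁ : (0:ℝ) < r₁ ^ 2 := by positivity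
  have hVr : 0 ≤ V r := hV0 r hr0
  -- multiply hA by a*b
  have hcomb : b * V r ≤ a * V r₁ + 4 * s * V r * b / r ^ 2 := by
    have h := mul_le_mul_of_nonneg_left hA (by positivity : (0:ℝ) ≤ a * b)
    have hL : a * b * ((a)⁻¹ * V r) = b * V r := by field_simp; try ring
    have hR : a * b * ((b)⁻¹ * V r₁ + 4 * ((a)⁻¹ * (r ^ 2)⁻¹ * (s * V r))) =
        a * V r₁ + 4 * s * V r * b / r ^ 2 := by field_simp; try ring
    rw [hL, hR] at h
    exact h
  have hmono : 4 * s / r ^ 2 ≤ 4 * s / r₁ ^ 2 := by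
    apply div_le_div_of_nonneg_left (by linarith) hq₁
    nlinarith
  have step2 : (1 - 4 * s / r ^ 2) * (V r * b) ≤ a * V r₁ := by
    have e : (1 - 4 * s / r ^ 2) * (V r * b) = b * V r - 4 * s * V r * b / r ^ 2 := by
      ring
    rw [e]; linarith
  have step1 : (1 - 4 * s / r₁ ^ 2) * (V r * b) ≤ (1 - 4 * s / r ^ 2) * (V r * b) :=
    mul_le_mul_of_nonneg_right (by linarith) (by positivity)
  rw [div_mul_eq_mul_div, le_div_iff₀ (mul_pos hd hb)]
  have e2 : V r * ((1 - 4 * s / r₁ ^ 2) * b) = (1 - 4 * s / r₁ ^ 2) * (V r * b) := by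
    ring
  rw [e2]
  calc (1 - 4 * s / r₁ ^ 2) * (V r * b) ≤ a * V r₁ := le_trans step1 step2
  _ = V r₁ * a := by ring
end

section
/- Let n be a positive integer, τ > 0, k̄ a nonnegative integer, and let w : ℕ → ℝ be a nonnegative function with T := ∑_{k=0}^{∞} w(k) < ∞ and w(k) ≥ τ·2^{−kn+2k−n−1} for all k ≥ k̄. Then for every integer K with 2K ≥ k̄ and τ·2^{8K−n−1} > T, there exists an integer j with 0 ≤ j ≤ K−1 such that, setting k₁ = 2K + 2j and k₂ = 6K + 1 − 2j, one has ∑_{k=k₁}^{k₂−1} w(k) ≤ 2^{4n} · ∑_{k=k₁+2}^{k₂−3} w(k). -/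
theorem volume_annuli_claim (n : ℕ) (hn : 0 < n) (τ : ℝ) (hτ : 0 < τ) (kbar : ℕ)
    (w : ℕ → ℝ) (hw0 : ∀ k, 0 ≤ w k) (hsum : Summable w)
    (hlow : ∀ k, kbar ≤ k → τ * (2 : ℝ) ^ (-(k : ℤ) * n + 2 * k - n - 1) ≤ w k) :
    ∀ K : ℕ, kbar ≤ 2 * K → (∑' k, w k) < τ * (2 : ℝ) ^ (8 * (K : ℤ) - n - 1) →
      ∃ j : ℕ, j < K ∧
        ∑ k ∈ Finset.Ico (2 * K + 2 * j) (6 * K + 1 - 2 * j), w k ≤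
          (2 : ℝ) ^ (4 * n) *
            ∑ k ∈ Finset.Ico (2 * K + 2 * j + 2) (6 * K + 1 - 2 * j - 2), w k := by
  intro K hK hT
  by_contra hcon
  push_neg at hcon
  set S : ℕ → ℝ := fun j => ∑ k ∈ Finset.Ico (2 * K + 2 * j) (6 * K + 1 - 2 * j), w k with hS
  have key : ∀ j, j ≤ K → (2 : ℝ) ^ (4 * n * j) * S j ≤ S 0 := by
    intro j hj
    induction j with
    | zero => simp
    | succ j ih =>
      have hj' : j ≤ K := Nat.le_of_succ_le hj
      have h1 := hcon j (Nat.lt_of_succ_le hj)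
      have hset : Finset.Ico (2 * K + 2 * j + 2) (6 * K + 1 - 2 * j - 2)
          = Finset.Ico (2 * K + 2 * (j + 1)) (6 * K + 1 - 2 * (j + 1)) := by
        congr 1 <;> omega
      rw [hset] at h1
      have h2 : (2 : ℝ) ^ (4 * n) * S (j + 1) ≤ S j := le_of_lt h1
      calc (2 : ℝ) ^ (4 * n * (j + 1)) * S (j + 1)
          = (2 : ℝ) ^ (4 * n * j) * ((2 : ℝ) ^ (4 * n) * S (j + 1)) := by
            rw [Nat.mul_succ, pow_add, mul_assoc]
        _ ≤ (2 : ℝ) ^ (4 * n * j) * S j :=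
            mul_le_mul_of_nonneg_left h2 (by positivity)
        _ ≤ S 0 := ih hj'
  have hSK : S K = w (4 * K) := by
    have h1 : 2 * K + 2 * K = 4 * K := by omega
    have h2 : 6 * K + 1 - 2 * K = 4 * K + 1 := by omega
    simp [hS, h1, h2]
  have hw4K := hlow (4 * K) (by omega)
  have hS0T : S 0 ≤ ∑' k, w k := Summable.sum_le_tsum _ (fun k _ => hw0 k) hsum
  have h1 : (2 : ℝ) ^ (4 * n * K) * (τ * (2 : ℝ) ^ (-(((4 * K : ℕ)) : ℤ) * n + 2 * (4 * K : ℕ) - n - 1))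
      ≤ (2 : ℝ) ^ (4 * n * K) * S K := by
    rw [hSK]; exact mul_le_mul_of_nonneg_left hw4K (by positivity)
  have heq : (2 : ℝ) ^ (4 * n * K) * (τ * (2 : ℝ) ^ (-(((4 * K : ℕ)) : ℤ) * n + 2 * (4 * K : ℕ) - n - 1))
      = τ * (2 : ℝ) ^ (8 * (K : ℤ) - n - 1) := by
    rw [← zpow_natCast (2 : ℝ) (4 * n * K), ← mul_assoc,
      mul_comm ((2 : ℝ) ^ ((4 * n * K : ℕ) : ℤ)) τ, mul_assoc,
      ← zpow_add₀ (two_ne_zero : (2 : ℝ) ≠ 0)]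
    congr 1
    push_cast
    ring
  have := key K le_rfl
  linarith
end

section
/- Let r ≤ k be integers and let V, η : {r−1, r, …, k+2} → ℝ be nonnegative nondecreasing functions (on this finite set of integers). Let L, C̄, s be constants with C̄ ≥ 0, s ≥ 0 and L > 12·C̄ + 6·s. Assume that η(t) ≤ s·V(t) for all t in the range, V(t+1) ≤ 2·V(t) for all r − 1 ≤ t ≤ k + 1, and L·(V(t+1) − V(t)) ≤ 2·C̄·(V(t+2) − V(t−1)) + (η(t+2) − η(t−1)) for all r ≤ t ≤ k. Then V(k+1) ≤ V(r) · L / (L − 12·C̄ − 6·s). -/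
theorem telescoping_lemma (r k : ℤ) (hrk : r ≤ k) (V η : ℤ → ℝ)
    (L Cbar s : ℝ) (hC : 0 ≤ Cbar) (hs : 0 ≤ s) (hL : 12 * Cbar + 6 * s < L)
    (hV0 : ∀ t, r - 1 ≤ t → t ≤ k + 2 → 0 ≤ V t)
    (hη0 : ∀ t, r - 1 ≤ t → t ≤ k + 2 → 0 ≤ η t)
    (hVmono : ∀ t, r - 1 ≤ t → t + 1 ≤ k + 2 → V t ≤ V (t + 1))
    (hηmono : ∀ t, r - 1 ≤ t → t + 1 ≤ k + 2 → η t ≤ η (t + 1))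
    (hηV : ∀ t, r - 1 ≤ t → t ≤ k + 2 → η t ≤ s * V t)
    (hdouble : ∀ t, r - 1 ≤ t → t ≤ k + 1 → V (t + 1) ≤ 2 * V t)
    (hmain : ∀ t, r ≤ t → t ≤ k →
      L * (V (t + 1) - V t) ≤ 2 * Cbar * (V (t + 2) - V (t - 1)) + (η (t + 2) - η (t - 1))) :
    V (k + 1) ≤ V r * L / (L - 12 * Cbar - 6 * s) := by
  have key : ∀ m, r ≤ m → m ≤ k + 1 →
      L * (V m - V r) ≤
        2 * Cbar * ((V (m - 1) + V m + V (m + 1)) - (V (r - 1) + V r + V (r + 1)))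
        + ((η (m - 1) + η m + η (m + 1)) - (η (r - 1) + η r + η (r + 1))) := by
    refine Int.le_induction ?_ ?_
    · intro _
      norm_num
    · intro n hn ih hle
      have hnk : n ≤ k := by linarith
      have h1 := hmain n hn hnk
      have h2 := ih (by linarith)
      have e1 : n + 1 - 1 = n := by ring
      have e2 : n + 1 + 1 = n + 2 := by ring
      rw [e1, e2]
      linarith
  have hk1 := key (k + 1) (by linarith) le_rfl
  have e1 : k + 1 - 1 = k := by ring
  have e2 : k + 1 + 1 = k + 2 := by ring
  rw [e1, e2] at hk1
  have hVk2 : V (k + 2) ≤ 2 * V (k + 1) := by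
    have := hdouble (k + 1) (by linarith) le_rfl
    rw [e2] at this; exact this
  have hVk : V k ≤ V (k + 1) := hVmono k (by linarith) (by linarith)
  have hVk10 : 0 ≤ V (k + 1) := hV0 (k + 1) (by linarith) (by linarith)
  have hηk : η k ≤ s * V k := hηV k (by linarith) (by linarith)
  have hηk1 : η (k + 1) ≤ s * V (k + 1) := hηV (k + 1) (by linarith) (by linarith)
  have hηk2 : η (k + 2) ≤ s * V (k + 2) := hηV (k + 2) (by linarith) le_rfl
  have hVr1 : 0 ≤ V (r - 1) := hV0 (r - 1) le_rfl (by linarith)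
  have hVr : 0 ≤ V r := hV0 r (by linarith) (by linarith)
  have hVr2 : 0 ≤ V (r + 1) := hV0 (r + 1) (by linarith) (by linarith)
  have hηr1 : 0 ≤ η (r - 1) := hη0 (r - 1) le_rfl (by linarith)
  have hηr : 0 ≤ η r := hη0 r (by linarith) (by linarith)
  have hηr2 : 0 ≤ η (r + 1) := hη0 (r + 1) (by linarith) (by linarith)
  have hVk0 : 0 ≤ V k := hV0 k (by linarith) (by linarith)
  have hVk20 : 0 ≤ V (k + 2) := hV0 (k + 2) (by linarith) le_rfl
  have hD : 0 < L - 12 * Cbar - 6 * s := by linarith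
  rw [le_div_iff₀ hD]
  nlinarith [mul_nonneg hC hVk10, mul_nonneg hs hVk10, mul_nonneg hC (sub_nonneg.mpr hVk),
    mul_nonneg hC (sub_nonneg.mpr hVk2), mul_nonneg hs (sub_nonneg.mpr hVk),
    mul_nonneg hs (sub_nonneg.mpr hVk2), mul_nonneg hC hVr1, mul_nonneg hC hVr,
    mul_nonneg hC hVr2]
end
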